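/- arXiv:2106.00311 — 3 statements merged into one kernel-verified Lean document; each statement's English description precedes it below -/
import Mathlib

section
/- Let f: ℝ^k → ℝ be twice continuously differentiable and suppose there exist symmetric matrices H⁻, H⁺ with H⁻ ⪯ Hess f(x) ⪯ H⁺ for all x. Let Z be an ℝ^k-valued random variable with mean μ and covariance matrix Σ, with f(Z) integrable. Then (1/2)·trace(H⁻Σ) ≤ E[f(Z)] − f(μ) ≤ (1/2)·trace(H⁺Σ). -/
open MeasureTheory Matrix

/-!
Taylor's theorem with Lagrange remainder along the segment from `μ` to `Z` gives
`f Z = f μ + Df(μ)(Z - μ) + ½ D²f(ξ)(Z - μ, Z - μ)` for some `ξ`, and the Hessian bounds sandwich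
the remainder between `½ (Z - μ)ᵀ H∓ (Z - μ)`. Taking expectations, the linear term vanishes
because `E[Z - μ] = 0`, and `E[(Z - μ)ᵀ H (Z - μ)] = tr(H Σ)`.
-/

theorem iteratedDeriv_comp_add_smul {E F : Type*} [NormedAddCommGroup E] [NormedSpace ℝ E]
    [NormedAddCommGroup F] [NormedSpace ℝ F] {n : ℕ} {f : E → F} (hf : ContDiff ℝ n f)
    (x v : E) (t : ℝ) :
    iteratedDeriv n (fun s : ℝ => f (x + s • v)) t =
      iteratedFDeriv ℝ n f (x + t • v) (fun _ => v) := by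
  have hcomp : (fun s : ℝ => f (x + s • v)) =
      (fun z => f (x + z)) ∘ ContinuousLinearMap.smulRight (1 : ℝ →L[ℝ] ℝ) v := by
    ext s; simp
  rw [iteratedDeriv_eq_iteratedFDeriv, hcomp,
    ContinuousLinearMap.iteratedFDeriv_comp_right (f := fun z => f (x + z)) _
      (hf.comp (contDiff_const.add contDiff_id)) _ le_rfl, iteratedFDeriv_comp_add_left]
  simp

theorem exists_eq_add_deriv_add_iteratedDeriv_two {g : ℝ → ℝ} (hg : ContDiff ℝ 2 g) :
    ∃ t, g 1 = g 0 + deriv g 0 + (1 / 2) * iteratedDeriv 2 g t := by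
  obtain ⟨t, -, ht⟩ := taylor_mean_remainder_lagrange_iteratedDeriv (n := 1) zero_ne_one
    hg.contDiffOn
  have h0 : iteratedDerivWithin 1 g (Set.uIcc 0 1) 0 = deriv g 0 := by
    rw [iteratedDerivWithin_one, Set.uIcc_of_le zero_le_one]
    exact (hg.differentiable two_ne_zero 0).derivWithin
      (uniqueDiffOn_Icc zero_lt_one 0 (by simp))
  refine ⟨t, ?_⟩
  simp only [taylorWithinEval_succ, taylor_within_zero_eval, h0] at ht
  norm_num [Nat.factorial] at ht
  linarith

theorem exists_eq_add_fderiv_add_iteratedFDeriv_two {E : Type*} [NormedAddCommGroup E]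
    [NormedSpace ℝ E] {f : E → ℝ} (hf : ContDiff ℝ 2 f) (x y : E) :
    ∃ z, f y = f x + fderiv ℝ f x (y - x) +
      (1 / 2) * iteratedFDeriv ℝ 2 f z (fun _ => y - x) := by
  have hline : ContDiff ℝ 2 (fun t : ℝ => f (x + t • (y - x))) := by fun_prop
  obtain ⟨t, ht⟩ := exists_eq_add_deriv_add_iteratedDeriv_two hline
  refine ⟨x + t • (y - x), ?_⟩
  rw [← iteratedDeriv_one, iteratedDeriv_comp_add_smul hf,
    iteratedDeriv_comp_add_smul (hf.of_le one_le_two)] at ht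
  simpa [iteratedFDeriv_one_apply] using ht

section Moments

variable {Ω : Type*} [MeasurableSpace Ω] {μ : Measure Ω}

theorem integral_comp_sub_integral_eq_zero [IsProbabilityMeasure μ] {E F : Type*}
    [NormedAddCommGroup E] [NormedSpace ℝ E] [CompleteSpace E]
    [NormedAddCommGroup F] [NormedSpace ℝ F] [CompleteSpace F]
    (L : E →L[ℝ] F) {X : Ω → E} (hX : Integrable X μ) :
    ∫ ω, L (X ω - ∫ ω', X ω' ∂μ) ∂μ = 0 := by
  have hcentered : Integrable (fun ω => X ω - ∫ ω', X ω' ∂μ) μ := hX.sub (integrable_const _)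
  rw [L.integral_comp_comm hcentered, integral_sub hX (integrable_const _)]
  simp

variable {ι : Type*} [Fintype ι]

theorem dotProduct_mulVec_self_eq_sum (H : Matrix ι ι ℝ) (v : ι → ℝ) :
    v ⬝ᵥ H *ᵥ v = ∑ i, ∑ j, H i j * (v i * v j) := by
  simp only [dotProduct, mulVec, Finset.mul_sum]
  exact Finset.sum_congr rfl fun i _ => Finset.sum_congr rfl fun j _ => by ring

theorem integrable_dotProduct_mulVec_self {W : Ω → ι → ℝ}
    (hW : ∀ i, MemLp (fun ω => W ω i) 2 μ) (H : Matrix ι ι ℝ) :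
    Integrable (fun ω => W ω ⬝ᵥ H *ᵥ W ω) μ := by
  simp_rw [dotProduct_mulVec_self_eq_sum]
  exact integrable_finsetSum _ fun i _ => integrable_finsetSum _ fun j _ =>
    ((hW i).integrable_mul (hW j)).const_mul _

theorem integral_dotProduct_mulVec_self {W : Ω → ι → ℝ}
    (hW : ∀ i, MemLp (fun ω => W ω i) 2 μ) (H C : Matrix ι ι ℝ)
    (hC : ∀ i j, C i j = ∫ ω, W ω i * W ω j ∂μ) :
    ∫ ω, W ω ⬝ᵥ H *ᵥ W ω ∂μ = (H * C).trace := by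
  have hint : ∀ i j, Integrable (fun ω => H i j * (W ω i * W ω j)) μ := fun i j =>
    ((hW i).integrable_mul (hW j)).const_mul _
  simp_rw [dotProduct_mulVec_self_eq_sum]
  rw [integral_finsetSum _ fun i _ => integrable_finsetSum _ fun j _ => hint i j]
  refine Finset.sum_congr rfl fun i _ => ?_
  rw [integral_finsetSum _ fun j _ => hint i j, diag_apply, mul_apply]
  refine Finset.sum_congr rfl fun j _ => ?_
  simp_rw [integral_const_mul, hC, mul_comm (W _ j)]

end Moments

theorem taylor_remainder_mem_Icc_of_iteratedFDeriv_two_mem_Icc {E : Type*}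
    [NormedAddCommGroup E] [NormedSpace ℝ E] {f : E → ℝ} (hf : ContDiff ℝ 2 f) {qm qp : E → ℝ}
    (hq : ∀ z u, iteratedFDeriv ℝ 2 f z (fun _ => u) ∈ Set.Icc (qm u) (qp u)) (x y : E) :
    f y - f x - fderiv ℝ f x (y - x) ∈ Set.Icc ((1 / 2) * qm (y - x)) ((1 / 2) * qp (y - x)) := by
  obtain ⟨z, hz⟩ := exists_eq_add_fderiv_add_iteratedFDeriv_two hf x y
  obtain ⟨hlo, hhi⟩ := hq z (y - x)
  constructor <;> linarith

theorem expectation_taylor_trace_bounds_general {Ω : Type*} [MeasurableSpace Ω]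
    (μ : Measure Ω) [IsProbabilityMeasure μ] (k : ℕ)
    (f : (Fin k → ℝ) → ℝ) (hf : ContDiff ℝ 2 f)
    (Hm Hp : Matrix (Fin k) (Fin k) ℝ)
    (hHess : ∀ x u, u ⬝ᵥ Hm.mulVec u ≤ iteratedFDeriv ℝ 2 f x (fun _ => u)
        ∧ iteratedFDeriv ℝ 2 f x (fun _ => u) ≤ u ⬝ᵥ Hp.mulVec u)
    (Z : Ω → (Fin k → ℝ)) (hZmeas : ∀ i, MemLp (fun ω => Z ω i) 2 μ)
    (μv : Fin k → ℝ) (hmean : ∀ i, ∫ ω, Z ω i ∂μ = μv i)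
    (Sm : Matrix (Fin k) (Fin k) ℝ)
    (hcov : ∀ i j, Sm i j = ∫ ω, (Z ω i - μv i) * (Z ω j - μv j) ∂μ)
    (hint : Integrable (fun ω => f (Z ω)) μ) :
    (1 / 2) * (Hm * Sm).trace ≤ (∫ ω, f (Z ω) ∂μ) - f μv
      ∧ (∫ ω, f (Z ω) ∂μ) - f μv ≤ (1 / 2) * (Hp * Sm).trace := by
  have hZi : ∀ i, Integrable (fun ω => Z ω i) μ := fun i => (hZmeas i).integrable one_le_two
  have hZ : Integrable Z μ := Integrable.of_eval hZi
  have hEZ : ∫ ω, Z ω ∂μ = μv := funext fun i => by rw [eval_integral hZi, hmean]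
  have hW : ∀ i, MemLp (fun ω => (Z ω - μv) i) 2 μ := fun i => (hZmeas i).sub (memLp_const _)
  set L := fderiv ℝ f μv
  have hlin : ∫ ω, L (Z ω - μv) ∂μ = 0 := hEZ ▸ integral_comp_sub_integral_eq_zero L hZ
  have hfZ : Integrable (fun ω => f (Z ω) - f μv) μ := hint.sub (integrable_const _)
  have hLZ : Integrable (fun ω => L (Z ω - μv)) μ :=
    L.integrable_comp (hZ.sub (integrable_const _))
  have hR : Integrable (fun ω => f (Z ω) - f μv - L (Z ω - μv)) μ := hfZ.sub hLZ
  have hER : ∫ ω, f (Z ω) - f μv - L (Z ω - μv) ∂μ = (∫ ω, f (Z ω) ∂μ) - f μv := by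
    rw [integral_sub hfZ hLZ, integral_sub hint (integrable_const _), hlin]
    simp
  have hbounds := fun ω =>
    taylor_remainder_mem_Icc_of_iteratedFDeriv_two_mem_Icc hf hHess μv (Z ω)
  have hEQ : ∀ H, ∫ ω, (1 / 2) * ((Z ω - μv) ⬝ᵥ H *ᵥ (Z ω - μv)) ∂μ =
      (1 / 2) * (H * Sm).trace := fun H => by
    rw [integral_const_mul, integral_dotProduct_mulVec_self hW H Sm hcov]
  constructor
  · rw [← hEQ, ← hER]
    exact integral_mono ((integrable_dotProduct_mulVec_self hW Hm).const_mul _) hR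
      fun ω => (hbounds ω).1
  · rw [← hEQ, ← hER]
    exact integral_mono hR ((integrable_dotProduct_mulVec_self hW Hp).const_mul _)
      fun ω => (hbounds ω).2

/-- If `f : ℝ^k → ℝ` is `C²` with `H⁻ ⪯ Hess f(x) ⪯ H⁺` everywhere
(the Hessian quadratic form is encoded via the second iterated Fréchet derivative),
and `Z` is a random vector with mean `μv` and covariance `Σm`, with `f(Z)` integrable,
then `(1/2)·tr(H⁻Σ) ≤ E[f(Z)] − f(μ) ≤ (1/2)·tr(H⁺Σ)`. -/
theorem expectation_taylor_trace_bounds {Ω : Type*} [MeasurableSpace Ω]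
    (μ : Measure Ω) [IsProbabilityMeasure μ] (k : ℕ)
    (f : (Fin k → ℝ) → ℝ) (hf : ContDiff ℝ 2 f)
    (Hm Hp : Matrix (Fin k) (Fin k) ℝ) (hHm : Hm.IsSymm) (hHp : Hp.IsSymm)
    (hHess : ∀ x u, u ⬝ᵥ Hm.mulVec u ≤ iteratedFDeriv ℝ 2 f x (fun _ => u)
        ∧ iteratedFDeriv ℝ 2 f x (fun _ => u) ≤ u ⬝ᵥ Hp.mulVec u)
    (Z : Ω → (Fin k → ℝ)) (hZmeas : ∀ i, MemLp (fun ω => Z ω i) 2 μ)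
    (μv : Fin k → ℝ) (hmean : ∀ i, ∫ ω, Z ω i ∂μ = μv i)
    (Sm : Matrix (Fin k) (Fin k) ℝ)
    (hcov : ∀ i j, Sm i j = ∫ ω, (Z ω i - μv i) * (Z ω j - μv j) ∂μ)
    (hint : Integrable (fun ω => f (Z ω)) μ) :
    (1 / 2) * (Hm * Sm).trace ≤ (∫ ω, f (Z ω) ∂μ) - f μv
      ∧ (∫ ω, f (Z ω) ∂μ) - f μv ≤ (1 / 2) * (Hp * Sm).trace :=
  expectation_taylor_trace_bounds_general μ k f hf Hm Hp hHess Z hZmeas μv hmean Sm hcov hint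
end

section
/- Let f⋆(x₁,x₂) = x₂³ − 3x₂ and let g(x₁) = x₁³ + 3x₁(σ²−1) with σ² > 1. There exists no continuous function φ: ℝ → ℝ such that f⋆(x₁, φ(x₁)) = g(x₁) for all x₁ ∈ ℝ. -/
/-- For `f⋆(x₁,x₂) = x₂³ − 3x₂` and `g(x₁) = x₁³ + 3x₁(σ² − 1)` with
`σ² > 1`, there is no continuous `φ : ℝ → ℝ` with `f⋆(x₁, φ(x₁)) = g(x₁)` for all `x₁`. -/
theorem no_continuous_corrected_imputation (s : ℝ) (hs : 1 < s) :
    ¬ ∃ φ : ℝ → ℝ, Continuous φ ∧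
      ∀ x : ℝ, (φ x) ^ 3 - 3 * φ x = x ^ 3 + 3 * x * (s - 1) := by
  rintro ⟨φ, hφc, hφ⟩
  -- g is strictly monotone
  have hmono : StrictMono (fun x : ℝ => x ^ 3 + 3 * x * (s - 1)) := by
    intro a b hab
    dsimp only
    nlinarith [sq_nonneg (a + b), sq_nonneg (a - b), sq_nonneg a, sq_nonneg b]
  have h1 : φ (-2) < -2 := by
    by_contra h
    push_neg at h
    have h2 := hφ (-2)
    nlinarith [sq_nonneg (φ (-2) - 1), mul_nonneg (sq_nonneg (φ (-2) - 1)) (by linarith : (0:ℝ) ≤ φ (-2) + 2)]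
  have h2 : 2 < φ 2 := by
    by_contra h
    push_neg at h
    have h3 := hφ 2
    nlinarith [sq_nonneg (φ 2 + 1), mul_nonneg (sq_nonneg (φ 2 + 1)) (by linarith : (0:ℝ) ≤ 2 - φ 2)]
  obtain ⟨a, _, ha⟩ := intermediate_value_Icc (by norm_num : (-2:ℝ) ≤ 2) hφc.continuousOn
    (show (-2:ℝ) ∈ Set.Icc (φ (-2)) (φ 2) from ⟨le_of_lt h1, by linarith⟩)
  obtain ⟨c, _, hc⟩ := intermediate_value_Icc (by norm_num : (-2:ℝ) ≤ 2) hφc.continuousOn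
    (show (1:ℝ) ∈ Set.Icc (φ (-2)) (φ 2) from ⟨by linarith, by linarith⟩)
  have hga : a ^ 3 + 3 * a * (s - 1) = -2 := by rw [← hφ a, ha]; norm_num
  have hgc : c ^ 3 + 3 * c * (s - 1) = -2 := by rw [← hφ c, hc]; norm_num
  have hac : a = c := hmono.injective (by simpa using hga.trans hgc.symm)
  rw [hac, hc] at ha
  norm_num at ha
end

section
/- Let g: ℝ → ℝ be continuous with lim_{x→+∞} g(x) = +∞ and lim_{x→−∞} g(x) = −∞, and suppose g is nondecreasing. Let f(t) = t³ − 3t. Then there is no continuous φ: ℝ → ℝ such that f(φ(x)) = g(x) for all x. -/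
open Filter

/-- If `g : ℝ → ℝ` is continuous, nondecreasing, tends to `+∞` at `+∞` and
to `−∞` at `−∞`, and `f(t) = t³ − 3t`, then there is no continuous `φ : ℝ → ℝ` with
`f(φ(x)) = g(x)` for all `x`. -/
theorem no_continuous_path_for_nondecreasing (g : ℝ → ℝ)
    (hg_cont : Continuous g) (hg_mono : Monotone g)
    (hg_top : Tendsto g atTop atTop) (hg_bot : Tendsto g atBot atBot) :
    ¬ ∃ φ : ℝ → ℝ, Continuous φ ∧ ∀ x : ℝ, (φ x) ^ 3 - 3 * φ x = g x := by
  rintro ⟨φ, hφc, hφ⟩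
  -- pick a with g a ≥ 3 and b with g b ≤ -3
  obtain ⟨a, ha⟩ := (hg_top.eventually_ge_atTop 3).exists
  obtain ⟨b, hb⟩ := (hg_bot.eventually_le_atBot (-3)).exists
  -- φ a > 2
  have hfa : (φ a) ^ 3 - 3 * φ a = g a := hφ a
  have hfb : (φ b) ^ 3 - 3 * φ b = g b := hφ b
  have hφa : 2 < φ a := by nlinarith [sq_nonneg (φ a + 1), sq_nonneg (φ a - 2)]
  have hφb : φ b < -2 := by nlinarith [sq_nonneg (φ b - 1), sq_nonneg (φ b + 2)]
  have hba : b ≤ a := by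
    by_contra h
    have := hg_mono (le_of_not_ge h)
    linarith
  -- IVT: get c1 ∈ [b, a] with φ c1 = -1
  have h1 : (-1 : ℝ) ∈ Set.Icc (φ b) (φ a) := by constructor <;> linarith
  obtain ⟨c1, hc1mem, hc1⟩ := intermediate_value_Icc hba hφc.continuousOn h1
  -- IVT: get c2 ∈ [c1, a] with φ c2 = 1
  have h2 : (1 : ℝ) ∈ Set.Icc (φ c1) (φ a) := by rw [hc1]; constructor <;> linarith
  obtain ⟨c2, hc2mem, hc2⟩ := intermediate_value_Icc hc1mem.2 hφc.continuousOn h2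
  have g1 : g c1 = 2 := by have := hφ c1; rw [hc1] at this; linarith
  have g2 : g c2 = -2 := by have := hφ c2; rw [hc2] at this; linarith
  have := hg_mono hc2mem.1
  rw [g1, g2] at this
  linarith
end
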